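/- arXiv:1612.04991 — 3 statements merged into one kernel-verified Lean document; each statement's English description precedes it below -/
import Mathlib

section
/- Let H : ℝ → (Hermitian d×d complex matrices) be continuous in t, and let ψ : ℝ → ℂ^d be differentiable with ‖ψ(t)‖ = 1 for all t and ψ'(t) = −i H(t) ψ(t). Then for every T ≥ 0, arccos |⟨ψ(0), ψ(T)⟩| ≤ ∫₀ᵀ ‖H(t)‖_op dt, where ‖·‖_op denotes the operator norm (largest singular value). In particular, if ⟨ψ(0), ψ(T)⟩ = 0 and (1/T)∫₀ᵀ ‖H(t)‖_op dt ≤ 𝓔 for some 𝓔 > 0, then T ≥ π/(2𝓔). -/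
open scoped Matrix ComplexOrder

/-- The operator norm (largest singular value) of a complex square matrix, defined as the
norm of the induced continuous linear endomorphism of Euclidean space. -/
noncomputable def opNorm {n : Type*} [Fintype n] [DecidableEq n] (A : Matrix n n ℂ) : ℝ :=
  ‖Matrix.toEuclideanCLM (𝕜 := ℂ) (n := n) A‖

lemma arccos_anti {x y : ℝ} (h : x ≤ y) : Real.arccos y ≤ Real.arccos x := by
  simp only [Real.arccos]
  have := Real.monotone_arcsin h
  linarith

open scoped RealInnerProductSpace in
lemma key_inner_bound {d : ℕ} (A : Matrix (Fin d) (Fin d) ℂ) (hA : A.IsHermitian)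
    (u v : EuclideanSpace ℂ (Fin d)) (hu : ‖u‖ = 1) (hv : ‖v‖ = 1) :
    -(opNorm A * ‖(inner ℂ u v : ℂ)‖ * Real.sqrt (1 - ‖(inner ℂ u v : ℂ)‖ ^ 2)) ≤
      ⟪(inner ℂ u v : ℂ),
        (inner ℂ u (-Complex.I • (Matrix.toEuclideanCLM (𝕜 := ℂ) A) v) : ℂ)⟫ := by
  set T := Matrix.toEuclideanCLM (𝕜 := ℂ) A with hTdef
  set g : ℂ := inner ℂ u v with hgdef
  set w : EuclideanSpace ℂ (Fin d) := u - (starRingEnd ℂ g) • v with hwdef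
  have hvu : (inner ℂ v u : ℂ) = starRingEnd ℂ g := by rw [hgdef, ← inner_conj_symm]
  have hvv : (inner ℂ v v : ℂ) = 1 := by
    rw [inner_self_eq_norm_sq_to_K, hv]; norm_num
  have hcg : (starRingEnd ℂ) g * g = ((‖g‖ ^ 2 : ℝ) : ℂ) := by
    rw [mul_comm, Complex.mul_conj]
    simp [Complex.normSq_eq_norm_sq]
  have hsa : ContinuousLinearMap.adjoint T = T := by
    rw [← ContinuousLinearMap.star_eq_adjoint, hTdef, ← map_star,
      Matrix.star_eq_conjTranspose, hA.eq]
  -- E := ⟪v, T v⟫ is real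
  set E : ℂ := inner ℂ v (T v) with hEdef
  set β : ℂ := inner ℂ w (T v) with hβdef
  have hE : E.im = 0 := by
    have h1 : starRingEnd ℂ E = inner ℂ (T v) v := inner_conj_symm _ _
    have h2 : (inner ℂ (T v) v : ℂ) = E := by
      conv_lhs => rw [← hsa]
      rw [ContinuousLinearMap.adjoint_inner_left]
    exact Complex.conj_eq_iff_im.mp (h1.trans h2)
  -- decomposition
  have hdecomp : u = (starRingEnd ℂ g) • v + w := by rw [hwdef]; abel
  -- norm of w
  have hw2 : ‖w‖ ^ 2 = 1 - ‖g‖ ^ 2 := by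
    rw [hwdef, norm_sub_sq (𝕜 := ℂ), hu, inner_smul_right, ← hgdef, hcg, norm_smul]
    simp [RCLike.norm_conj, hv, ← Complex.ofReal_pow, Complex.ofReal_re]
    ring
  have hwnorm : ‖w‖ = Real.sqrt (1 - ‖g‖ ^ 2) := by
    rw [← hw2, Real.sqrt_sq (norm_nonneg _)]
  -- expand inner ℂ u (-I • T v)
  have hexp : (inner ℂ u (-Complex.I • T v) : ℂ)
      = -Complex.I * (g * E + β) := by
    conv_lhs => rw [hdecomp]
    rw [inner_add_left, inner_smul_left, inner_smul_right, inner_smul_right,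
      Complex.conj_conj]
    ring
  have hTnorm : ‖T‖ = opNorm A := rfl
  have hβ : ‖β‖ ≤ Real.sqrt (1 - ‖g‖ ^ 2) * opNorm A := by
    calc ‖β‖ ≤ ‖w‖ * ‖T v‖ := norm_inner_le_norm _ _
      _ ≤ ‖w‖ * (‖T‖ * ‖v‖) := by
          have := T.le_opNorm v
          have hw0 : (0:ℝ) ≤ ‖w‖ := norm_nonneg _
          nlinarith
      _ = Real.sqrt (1 - ‖g‖ ^ 2) * opNorm A := by rw [hwnorm, hv, hTnorm]; ring
  have hre : (inner ℝ g (inner ℂ u (-Complex.I • T v) : ℂ) : ℝ)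
      = ((starRingEnd ℂ) g * β).im := by
    rw [Complex.inner, hexp, mul_comm _ ((starRingEnd ℂ) g)]
    have expand : (starRingEnd ℂ) g * (-Complex.I * (g * E + β))
        = -Complex.I * (((‖g‖ ^ 2 : ℝ) : ℂ) * E)
          + -Complex.I * ((starRingEnd ℂ) g * β) := by
      rw [← hcg]; ring
    rw [expand]
    simp [Complex.add_re, Complex.neg_re, Complex.mul_re, Complex.mul_im, Complex.I_re,
      Complex.I_im, hE, ← Complex.ofReal_pow]
  rw [hre]
  have h1 : |((starRingEnd ℂ) g * β).im| ≤ ‖(starRingEnd ℂ) g * β‖ :=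
    Complex.abs_im_le_norm _
  have h2 : ‖(starRingEnd ℂ) g * β‖ = ‖g‖ * ‖β‖ := by
    rw [norm_mul, RCLike.norm_conj]
  have h3 : ‖g‖ * ‖β‖ ≤ ‖g‖ * (Real.sqrt (1 - ‖g‖ ^ 2) * opNorm A) := by
    have := norm_nonneg g
    nlinarith
  have h4 : -(‖g‖ * (Real.sqrt (1 - ‖g‖ ^ 2) * opNorm A))
      ≤ ((starRingEnd ℂ) g * β).im := by
    rw [← h2] at h3
    have := neg_abs_le (((starRingEnd ℂ) g * β).im)
    linarith
  linarith [h4]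

set_option maxHeartbeats 2000000 in
open scoped RealInnerProductSpace in
/-- **Quantum speed limit from the operator norm of the Hamiltonian.**
If `H(t)` is a continuous family of Hermitian matrices and `ψ(t)` is a differentiable family
of unit vectors solving the Schrödinger equation `ψ'(t) = −i H(t) ψ(t)`, then for every
`T ≥ 0` one has `arccos |⟨ψ(0), ψ(T)⟩| ≤ ∫₀ᵀ ‖H(t)‖_op dt`.  In particular, if
`⟨ψ(0), ψ(T)⟩ = 0` and the time-averaged operator norm `(1/T)∫₀ᵀ ‖H(t)‖_op dt` is at most
`𝓔 > 0`, then `T ≥ π/(2𝓔)`. -/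
theorem speed_limit_opNorm {d : ℕ}
    (H : ℝ → Matrix (Fin d) (Fin d) ℂ)
    (hherm : ∀ t, (H t).IsHermitian)
    (hcont : Continuous H)
    (ψ : ℝ → (Fin d → ℂ))
    (hnorm : ∀ t, star (ψ t) ⬝ᵥ ψ t = 1)
    (hschro : ∀ t, HasDerivAt ψ (-Complex.I • (H t).mulVec (ψ t)) t)
    (T : ℝ) (hT : 0 ≤ T) :
    Real.arccos ‖star (ψ 0) ⬝ᵥ ψ T‖ ≤
        (∫ t in (0:ℝ)..T, opNorm (H t)) ∧
      (∀ 𝓔 : ℝ, 0 < 𝓔 → star (ψ 0) ⬝ᵥ ψ T = 0 →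
        (∫ t in (0:ℝ)..T, opNorm (H t)) / T ≤ 𝓔 →
        T ≥ Real.pi / (2 * 𝓔)) := by
  classical
  set cle := PiLp.continuousLinearEquiv 2 ℂ (fun _ : Fin d => ℂ) with hcle
  set φ : ℝ → EuclideanSpace ℂ (Fin d) := fun t => cle.symm (ψ t) with hφ
  -- the overlap function and its derivative
  set g : ℝ → ℂ := fun t => (inner ℂ (φ 0) (φ t) : ℂ) with hgdef
  set gd : ℝ → ℂ :=
    fun t => (inner ℂ (φ 0) (-Complex.I • (Matrix.toEuclideanCLM (𝕜 := ℂ) (H t)) (φ t)) : ℂ)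
    with hgddef
  have hmulvec : ∀ (A : Matrix (Fin d) (Fin d) ℂ) (x : Fin d → ℂ),
      (Matrix.toEuclideanCLM (𝕜 := ℂ) A) ((WithLp.equiv 2 _).symm x)
        = (WithLp.equiv 2 _).symm (A.mulVec x) := by
    intro A x
    exact Matrix.toEuclideanCLM_toLp A x
  have hφd : ∀ t, HasDerivAt φ (-Complex.I • (Matrix.toEuclideanCLM (𝕜 := ℂ) (H t)) (φ t)) t := by
    intro t
    have h := ((cle.symm.toContinuousLinearMap.restrictScalars ℝ).hasFDerivAt
       (x := ψ t)).comp_hasDerivAt t (hschro t)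
    have heq : (cle.symm.toContinuousLinearMap.restrictScalars ℝ)
          (-Complex.I • (H t).mulVec (ψ t))
        = -Complex.I • (Matrix.toEuclideanCLM (𝕜 := ℂ) (H t)) (φ t) := by
      have h1 : (cle.symm.toContinuousLinearMap.restrictScalars ℝ)
          (-Complex.I • (H t).mulVec (ψ t))
          = -Complex.I • cle.symm ((H t).mulVec (ψ t)) := by
        simp
      have h2 : cle.symm ((H t).mulVec (ψ t))
          = (Matrix.toEuclideanCLM (𝕜 := ℂ) (H t)) (φ t) := by
        simp only [hφ, hcle, PiLp.coe_symm_continuousLinearEquiv]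
        exact (hmulvec (H t) (ψ t)).symm
      rw [h1, h2]
    rw [heq] at h
    exact h
  have hgd : ∀ t, HasDerivAt g (gd t) t := by
    intro t
    exact (((innerSL ℂ (φ 0)).restrictScalars ℝ).hasFDerivAt).comp_hasDerivAt t (hφd t)
  -- identification with the dot product
  have hg_eq : ∀ s t : ℝ, star (ψ s) ⬝ᵥ ψ t = (inner ℂ (φ s) (φ t) : ℂ) := by
    intro s t
    simp [hφ, hcle, PiLp.inner_apply, RCLike.inner_apply, dotProduct, Pi.star_apply,
      RCLike.star_def, PiLp.coe_symm_continuousLinearEquiv, PiLp.toLp_apply]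
    exact Finset.sum_congr rfl fun _ _ => mul_comm _ _
  have hφnorm : ∀ t, ‖φ t‖ = 1 := by
    intro t
    have h1 : (inner ℂ (φ t) (φ t) : ℂ) = 1 := by rw [← hg_eq]; exact hnorm t
    rw [inner_self_eq_norm_sq_to_K] at h1
    have h2 : ‖φ t‖ ^ 2 = 1 := by
      have := congrArg Complex.re h1
      simpa [← Complex.ofReal_pow] using this
    nlinarith [norm_nonneg (φ t)]
  -- continuity of the operator norm of H
  have hopcont : Continuous fun t => opNorm (H t) := by
    have hTC : Continuous fun A : Matrix (Fin d) (Fin d) ℂ =>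
        Matrix.toEuclideanCLM (𝕜 := ℂ) A := by
      apply LinearMap.continuous_of_finiteDimensional
        (f := { toFun := fun A : Matrix (Fin d) (Fin d) ℂ => Matrix.toEuclideanCLM (𝕜 := ℂ) A,
                map_add' := fun a b => map_add _ a b,
                map_smul' := fun c A => map_smul _ c A })
    exact continuous_norm.comp (hTC.comp hcont)
  set Φ : ℝ → ℝ := fun t => ∫ s in (0:ℝ)..t, opNorm (H s) with hΦdef
  have hΦd : ∀ t, HasDerivAt Φ (opNorm (H t)) t :=
    fun t => (hopcont.integral_hasStrictDerivAt 0 t).hasDerivAt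
  have hΦmono : Monotone Φ := by
    apply monotone_of_deriv_nonneg (fun t => (hΦd t).differentiableAt)
    intro t
    rw [(hΦd t).deriv]
    exact norm_nonneg _
  have hΦ0 : Φ 0 = 0 := intervalIntegral.integral_same
  have hΦT0 : 0 ≤ Φ T := by rw [← hΦ0]; exact hΦmono hT
  have habs : ‖star (ψ 0) ⬝ᵥ ψ T‖ = ‖g T‖ := by
    rw [hg_eq 0 T]
  have hg0 : ‖g 0‖ = 1 := by
    have h : g 0 = 1 := by
      show (inner ℂ (φ 0) (φ 0) : ℂ) = 1
      rw [← hg_eq]; exact hnorm 0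
    rw [h, norm_one]
  -- Part 1
  have part1 : Real.arccos ‖g T‖ ≤ Φ T := by
    by_cases hcase : Φ T < Real.pi / 2
    case neg =>
      push_neg at hcase
      exact le_trans (Real.arccos_le_pi_div_two.mpr (norm_nonneg _)) hcase
    -- the fencing estimate for each small ε
    have hfence : ∀ ε : ℝ, 0 < ε → Φ T + ε * T + ε < Real.pi / 2 →
        Real.cos (Φ T + ε * T + ε) ≤ ‖g T‖ := by
      intro ε hε hsmall
      set θ : ℝ → ℝ := fun t => Φ t + ε * t + ε with hθdef
      have hθd : ∀ t, HasDerivAt θ (opNorm (H t) + ε) t := by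
        intro t
        have h := ((hΦd t).add ((hasDerivAt_id t).const_mul ε)).add_const ε
        simpa [hθdef] using h
      set B : ℝ → ℝ := fun t => -Real.cos (θ t) with hBdef
      set B' : ℝ → ℝ := fun t => Real.sin (θ t) * (opNorm (H t) + ε) with hB'def
      have hBd : ∀ t, HasDerivAt B (B' t) t := by
        intro t
        have h := ((Real.hasDerivAt_cos (θ t)).comp t (hθd t)).neg
        have hBt : B' t = -(-Real.sin (θ t) * (opNorm (H t) + ε)) := by
          simp only [hB'def]; ring
        rw [hBt]
        exact h
      set f : ℝ → ℝ := fun t => -‖g t‖ with hfdef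
      set f' : ℝ → ℝ := fun t =>
        if g t = 0 then 0 else -((inner ℝ (g t) (gd t) : ℝ) / ‖g t‖) with hf'def
      have hgc : Continuous g := by
        exact continuous_iff_continuousAt.mpr fun t => (hgd t).continuousAt
      have hrd : ∀ t, g t ≠ 0 → HasDerivAt (fun s => ‖g s‖)
          ((inner ℝ (g t) (gd t) : ℝ) / ‖g t‖) t := by
        intro t h0
        have hne : ‖g t‖ ^ 2 ≠ 0 := pow_ne_zero 2 (norm_ne_zero_iff.mpr h0)
        have hq : HasDerivAt (fun s => ‖g s‖ ^ 2) (2 * (inner ℝ (g t) (gd t) : ℝ)) t :=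
          (hgd t).norm_sq
        have hsq := (Real.hasDerivAt_sqrt hne).comp t hq
        have hfun : (fun s => Real.sqrt (‖g s‖ ^ 2)) = fun s => ‖g s‖ := by
          funext s
          exact Real.sqrt_sq (norm_nonneg _)
        have hsq2 : HasDerivAt (fun s => ‖g s‖)
            (1 / (2 * Real.sqrt (‖g t‖ ^ 2)) * (2 * (inner ℝ (g t) (gd t) : ℝ))) t := by
          have hcomp : (Real.sqrt ∘ fun s => ‖g s‖ ^ 2) = fun s => ‖g s‖ := by
            funext s
            simp [Function.comp, Real.sqrt_sq (norm_nonneg _)]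
          rw [hcomp] at hsq
          exact hsq
        convert hsq2 using 1
        rw [Real.sqrt_sq (norm_nonneg _)]
        field_simp
      have hΦc : Continuous Φ := continuous_iff_continuousAt.mpr fun t => (hΦd t).continuousAt
      have hθc : Continuous θ := by
        have : Continuous fun t : ℝ => Φ t + ε * t + ε :=
          (hΦc.add (continuous_const.mul continuous_id)).add continuous_const
        exact this
      have Hf : ContinuousOn f (Set.Icc (0:ℝ) T) := (hgc.norm.neg).continuousOn
      have Hslope : ∀ x ∈ Set.Ico (0:ℝ) T, ∀ c, f' x < c →
          ∃ᶠ z in nhdsWithin x (Set.Ioi x), slope f x z < c := by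
        intro x hx c hc
        by_cases h0 : g x = 0
        · have hc0 : (0:ℝ) < c := by simpa [hf'def, h0] using hc
          have : ∀ᶠ z in nhdsWithin x (Set.Ioi x), slope f x z < c := by
            filter_upwards [self_mem_nhdsWithin] with z hz
            have hz' : x < z := hz
            have hfz : f z - f x ≤ 0 := by
              simp [hfdef, h0]
            calc slope f x z = (f z - f x) / (z - x) := by rw [slope_def_field]
              _ ≤ 0 := div_nonpos_of_nonpos_of_nonneg hfz (by linarith)
              _ < c := hc0
          exact this.frequently
        · have hd : HasDerivAt f (f' x) x := by
            have h := (hrd x h0).neg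
            have heq2 : f' x = -((inner ℝ (g x) (gd x) : ℝ) / ‖g x‖) := by
              simp only [hf'def, if_neg h0]
            rw [heq2]
            exact h
          exact hd.hasDerivWithinAt.liminf_right_slope_le hc
      have Ha : f 0 ≤ B 0 := by
        show -‖g 0‖ ≤ -Real.cos (θ 0)
        have h1 : θ 0 = ε := by simp [hθdef, hΦ0]
        rw [hg0, h1]
        linarith [Real.cos_le_one ε]
      have HB : ContinuousOn B (Set.Icc (0:ℝ) T) :=
        ((Real.continuous_cos.comp hθc).neg).continuousOn
      have HB' : ∀ x ∈ Set.Ico (0:ℝ) T, HasDerivWithinAt B (B' x) (Set.Ici x) x :=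
        fun x _ => (hBd x).hasDerivWithinAt
      have Hbound : ∀ x ∈ Set.Ico (0:ℝ) T, f x = B x → f' x < B' x := by
        intro x hx heq
        have hθlo : ε ≤ θ x := by
          have h1 : 0 ≤ Φ x := by rw [← hΦ0]; exact hΦmono hx.1
          have h2 : 0 ≤ ε * x := mul_nonneg hε.le hx.1
          simp only [hθdef]; linarith
        have hθhi : θ x < Real.pi / 2 := by
          have h1 : Φ x ≤ Φ T := hΦmono hx.2.le
          have h2 : ε * x ≤ ε * T := mul_le_mul_of_nonneg_left hx.2.le hε.le
          simp only [hθdef]; linarith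
        have hθpos : 0 < θ x := lt_of_lt_of_le hε hθlo
        have hpi2 : -(Real.pi / 2) < (0:ℝ) := by linarith [Real.pi_pos]
        have hpi2' : Real.pi / 2 ≤ Real.pi := by linarith [Real.pi_pos]
        have hcospos : 0 < Real.cos (θ x) :=
          Real.cos_pos_of_mem_Ioo ⟨hpi2.trans hθpos, hθhi⟩
        have hsinpos : 0 < Real.sin (θ x) :=
          Real.sin_pos_of_pos_of_lt_pi hθpos (lt_of_lt_of_le hθhi hpi2')
        have hgx : ‖g x‖ = Real.cos (θ x) := by
          have h := heq
          simp only [hfdef, hBdef] at h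
          linarith
        have h0 : g x ≠ 0 := by
          rw [← norm_ne_zero_iff, hgx]
          exact hcospos.ne'
        have hipb : -(opNorm (H x) * ‖g x‖ * Real.sqrt (1 - ‖g x‖ ^ 2))
            ≤ (inner ℝ (g x) (gd x) : ℝ) :=
          key_inner_bound (H x) (hherm x) (φ 0) (φ x) (hφnorm 0) (hφnorm x)
        have hsqrt : Real.sqrt (1 - ‖g x‖ ^ 2) = Real.sin (θ x) := by
          rw [hgx]
          have h2 : 1 - Real.cos (θ x) ^ 2 = Real.sin (θ x) ^ 2 := by
            have := Real.sin_sq_add_cos_sq (θ x)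
            linarith
          rw [h2, Real.sqrt_sq hsinpos.le]
        rw [hsqrt] at hipb
        have hfx : f' x = -((inner ℝ (g x) (gd x) : ℝ) / ‖g x‖) := by
          simp only [hf'def, if_neg h0]
        rw [hfx]
        show _ < Real.sin (θ x) * (opNorm (H x) + ε)
        have hgxpos : 0 < ‖g x‖ := by rw [hgx]; exact hcospos
        have hop : 0 ≤ opNorm (H x) :=
          norm_nonneg (Matrix.toEuclideanCLM (𝕜 := ℂ) (H x))
        rw [← neg_div, div_lt_iff₀ hgxpos]
        nlinarith [mul_pos (mul_pos hsinpos hε) hgxpos]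
      have main : ∀ x ∈ Set.Icc (0:ℝ) T, f x ≤ B x := fun x hx =>
        image_le_of_liminf_slope_right_lt_deriv_boundary' Hf Hslope Ha HB HB' Hbound hx
      have := main T ⟨hT, le_rfl⟩
      simp only [hfdef, hBdef, hθdef] at this
      linarith
    -- limit ε → 0⁺
    have hδpos : 0 < (Real.pi / 2 - Φ T) / (T + 1) := by
      apply div_pos (by linarith) (by linarith)
    have hev : ∀ᶠ ε in nhdsWithin 0 (Set.Ioi (0:ℝ)),
        Real.cos (Φ T + ε * T + ε) ≤ ‖g T‖ := by
      filter_upwards [Ioo_mem_nhdsGT_of_mem (Set.mem_Ico.mpr ⟨le_rfl, hδpos⟩)] with ε hε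
      apply hfence ε hε.1
      have : ε * (T + 1) < Real.pi / 2 - Φ T := by
        rw [← lt_div_iff₀ (by linarith : (0:ℝ) < T + 1)]
        exact hε.2
      nlinarith
    have htend : Filter.Tendsto (fun ε : ℝ => Real.cos (Φ T + ε * T + ε))
        (nhdsWithin 0 (Set.Ioi (0:ℝ))) (nhds (Real.cos (Φ T))) := by
      have hc : Continuous fun ε : ℝ => Real.cos (Φ T + ε * T + ε) :=
        Real.continuous_cos.comp
          ((continuous_const.add (continuous_id.mul continuous_const)).add continuous_id)
      have := hc.tendsto 0
      simp only [zero_mul, add_zero] at this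
      exact this.mono_left nhdsWithin_le_nhds
    have hcos_le : Real.cos (Φ T) ≤ ‖g T‖ := le_of_tendsto htend hev
    calc Real.arccos ‖g T‖ ≤ Real.arccos (Real.cos (Φ T)) := arccos_anti hcos_le
      _ = Φ T := Real.arccos_cos hΦT0 (by linarith [Real.pi_pos])
  constructor
  · rw [habs]; exact part1
  · intro 𝓔 h𝓔 horto havg
    have hTne : T ≠ 0 := by
      intro h
      rw [h] at horto
      rw [hnorm 0] at horto
      exact one_ne_zero horto
    have hTpos : 0 < T := lt_of_le_of_ne hT (Ne.symm hTne)
    have h1 : Real.pi / 2 ≤ Φ T := by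
      have : Real.arccos ‖g T‖ = Real.pi / 2 := by
        rw [← habs, horto]
        simp [Real.arccos_zero]
      linarith [part1, this.symm.le, this.ge]
    have h2 : Φ T ≤ 𝓔 * T := by
      rw [div_le_iff₀ hTpos] at havg
      linarith
    rw [ge_iff_le, div_le_iff₀ (by positivity : (0:ℝ) < 2 * 𝓔)]
    nlinarith
end

section
/- (Margolus–Levitin bound) Let H be a Hermitian d×d complex matrix with smallest eigenvalue λ_min, let ψ₀ ∈ ℂ^d be a unit vector, and let ψ(t) = exp(−itH)ψ₀. If T > 0 satisfies ⟨ψ₀, ψ(T)⟩ = 0, then T ≥ π / (2(⟨ψ₀, Hψ₀⟩ − λ_min)). -/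
open scoped Matrix ComplexOrder

open Real in
/-- The Margolus–Levitin trigonometric inequality: `cos x ≥ 1 - (2/π)(x + sin x)` for `x ≥ 0`. -/
lemma ml_cos_ineq {x : ℝ} (hx : 0 ≤ x) :
    1 - 2 / π * (x + Real.sin x) ≤ Real.cos x := by
  have hπ : (0:ℝ) < π := Real.pi_pos
  set θ := arctan (2 / π) with hθdef
  have hθ0 : 0 ≤ θ := by
    rw [hθdef, ← arctan_zero]
    exact arctan_strictMono.monotone (by positivity)
  have hθlt : θ < π / 2 := arctan_lt_pi_div_two _
  have hcosθ : 0 < Real.cos θ := cos_arctan_pos _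
  have hsinθ : Real.sin θ = 2 / π * Real.cos θ := by
    have := Real.tan_arctan (2 / π)
    rw [Real.tan_eq_sin_div_cos] at this
    field_simp at this ⊢
    linarith [this]
  have claimA : ∀ c, 0 ≤ c → c ≤ θ → Real.sin c ≤ 2 / π * Real.cos c := by
    intro c h0 h1
    have hs : Real.sin c ≤ Real.sin θ := by
      rcases eq_or_lt_of_le h1 with h | h
      · rw [h]
      · exact le_of_lt (strictMonoOn_sin ⟨by linarith, by linarith⟩ ⟨by linarith, by linarith⟩ h)
    have hc : Real.cos θ ≤ Real.cos c := by
      rcases eq_or_lt_of_le h1 with h | h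
      · rw [h]
      · exact le_of_lt (strictAntiOn_cos ⟨by linarith, by linarith⟩ ⟨by linarith, by linarith⟩ h)
    calc Real.sin c ≤ Real.sin θ := hs
      _ = 2 / π * Real.cos θ := hsinθ
      _ ≤ 2 / π * Real.cos c := by
          apply mul_le_mul_of_nonneg_left hc (by positivity)
  have claimB : ∀ c, θ ≤ c → c ≤ π / 2 → 2 / π * Real.cos c ≤ Real.sin c := by
    intro c h0 h1
    have hs : Real.sin θ ≤ Real.sin c := by
      rcases eq_or_lt_of_le h0 with h | h
      · rw [h]
      · exact le_of_lt (strictMonoOn_sin ⟨by linarith, by linarith⟩ ⟨by linarith, by linarith⟩ h)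
    have hc : Real.cos c ≤ Real.cos θ := by
      rcases eq_or_lt_of_le h0 with h | h
      · rw [h]
      · exact le_of_lt (strictAntiOn_cos ⟨by linarith, by linarith⟩ ⟨by linarith, by linarith⟩ h)
    calc 2 / π * Real.cos c ≤ 2 / π * Real.cos θ := by
          apply mul_le_mul_of_nonneg_left hc (by positivity)
      _ = Real.sin θ := hsinθ.symm
      _ ≤ Real.sin c := hs
  set g : ℝ → ℝ := fun y => 2 / π * (y + Real.sin y) + Real.cos y - 1 with hgdef
  have hderiv : ∀ y : ℝ, HasDerivAt g (2 / π * (1 + Real.cos y) - Real.sin y) y := by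
    intro y
    have h1 : HasDerivAt (fun y : ℝ => y + Real.sin y) (1 + Real.cos y) y :=
      (hasDerivAt_id y).add (Real.hasDerivAt_sin y)
    have h2 := (h1.const_mul (2 / π)).add (Real.hasDerivAt_cos y)
    exact (h2.sub_const 1).congr_deriv (by ring)
  have hdiff : Differentiable ℝ g := fun y => (hderiv y).differentiableAt
  have hderiv' : ∀ y : ℝ, deriv g y = 2 / π * (1 + Real.cos y) - Real.sin y :=
    fun y => (hderiv y).deriv
  have hdhalf : ∀ y : ℝ, deriv g y
      = 2 * Real.cos (y / 2) * (2 / π * Real.cos (y / 2) - Real.sin (y / 2)) := by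
    intro y
    have hc2 : Real.cos y = 2 * Real.cos (y / 2) ^ 2 - 1 := by
      have := Real.cos_two_mul (y / 2); rw [← this]; ring_nf
    have hs2 : Real.sin y = 2 * Real.sin (y / 2) * Real.cos (y / 2) := by
      have := Real.sin_two_mul (y / 2); rw [← this]; ring_nf
    rw [hderiv', hc2, hs2]; ring
  have hg0 : g 0 = 0 := by simp [hgdef]
  have hgπ : g π = 0 := by
    simp [hgdef, Real.sin_pi, Real.cos_pi]
    field_simp
    norm_num
  have hmono : MonotoneOn g (Set.Icc 0 (2 * θ)) := by
    apply monotoneOn_of_deriv_nonneg (convex_Icc _ _) hdiff.continuous.continuousOn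
      (hdiff.differentiableOn)
    intro y hy
    rw [interior_Icc] at hy
    rw [hdhalf]
    have h1 : 0 ≤ Real.cos (y / 2) := by
      apply Real.cos_nonneg_of_mem_Icc
      constructor <;> [linarith [hy.1]; linarith [hy.2, hθlt]]
    have h2 := claimA (y / 2) (by linarith [hy.1]) (by linarith [hy.2])
    nlinarith
  have hanti : AntitoneOn g (Set.Icc (2 * θ) π) := by
    apply antitoneOn_of_deriv_nonpos (convex_Icc _ _) hdiff.continuous.continuousOn
      (hdiff.differentiableOn)
    intro y hy
    rw [interior_Icc] at hy
    rw [hdhalf]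
    have h1 : 0 ≤ Real.cos (y / 2) := by
      apply Real.cos_nonneg_of_mem_Icc
      constructor <;> [linarith [hy.1, hθ0]; linarith [hy.2]]
    have h2 := claimB (y / 2) (by linarith [hy.1]) (by linarith [hy.2])
    nlinarith
  have key : ∀ y, 0 ≤ y → 0 ≤ g y := by
    intro y hy
    rcases le_or_gt y π with hle | hgt
    · rcases le_or_gt y (2 * θ) with h2 | h2
      · have := hmono (Set.mem_Icc.mpr ⟨le_rfl, by linarith⟩) (Set.mem_Icc.mpr ⟨hy, h2⟩) hy
        rwa [hg0] at this
      · have := hanti (Set.mem_Icc.mpr ⟨le_of_lt h2, hle⟩)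
          (Set.mem_Icc.mpr ⟨by linarith [hθlt], le_rfl⟩) hle
        rwa [hgπ] at this
    · have hsin : π - y ≤ Real.sin y := by
        have h1 : Real.sin (y - π) ≤ y - π := Real.sin_le (by linarith)
        rw [Real.sin_sub_pi] at h1
        linarith
      have hcos : -1 ≤ Real.cos y := Real.neg_one_le_cos y
      have : 2 / π * (y + Real.sin y) ≥ 2 := by
        have h2 : π ≤ y + Real.sin y := by linarith
        calc (2:ℝ) = 2 / π * π := by field_simp
          _ ≤ 2 / π * (y + Real.sin y) := by
            apply mul_le_mul_of_nonneg_left h2 (by positivity)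
      simp only [hgdef]
      linarith
  have := key x hx
  simp only [hgdef] at this
  linarith

/-- **Margolus–Levitin quantum speed limit.**
Let `H` be a Hermitian `d×d` complex matrix with smallest eigenvalue `λ_min`, let `ψ₀ ∈ ℂ^d`
be a unit vector, and let `ψ(t) = exp(−itH) ψ₀` be the generated time evolution.  If the
state at time `T > 0` is orthogonal to the initial state, `⟨ψ₀, ψ(T)⟩ = 0`, then
`T ≥ π / (2(⟨ψ₀, Hψ₀⟩ − λ_min))`. -/
theorem margolus_levitin {d : ℕ} (hd : 0 < d)
    (H : Matrix (Fin d) (Fin d) ℂ) (hH : H.IsHermitian)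
    (lmin : ℝ)
    (hlb : ∀ i, lmin ≤ hH.eigenvalues i)
    (hmem : ∃ i, hH.eigenvalues i = lmin)
    (ψ₀ : Fin d → ℂ) (hnorm : star ψ₀ ⬝ᵥ ψ₀ = 1)
    (T : ℝ) (hT : 0 < T)
    (horth : star ψ₀ ⬝ᵥ
      (NormedSpace.exp ((-(T : ℂ) * Complex.I) • H)).mulVec ψ₀ = 0) :
    T ≥ Real.pi / (2 * ((star ψ₀ ⬝ᵥ H.mulVec ψ₀).re - lmin)) := by
  have hπ : (0:ℝ) < Real.pi := Real.pi_pos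
  set c : ℂ := -(T : ℂ) * Complex.I with hc
  set U : Matrix (Fin d) (Fin d) ℂ := ↑(hH.eigenvectorUnitary) with hU
  have hstar : star U * U = 1 := Matrix.mem_unitaryGroup_iff'.mp hH.eigenvectorUnitary.2
  have hmulstar : U * star U = 1 := Matrix.mem_unitaryGroup_iff.mp hH.eigenvectorUnitary.2
  have hinv : U⁻¹ = star U := Matrix.inv_eq_left_inv hstar
  have hUnit : IsUnit U := ⟨⟨U, star U, hmulstar, hstar⟩, rfl⟩
  set φ : Fin d → ℂ := (star U).mulVec ψ₀ with hφ
  set p : Fin d → ℝ := fun i => Complex.normSq (φ i) with hp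
  have hp0 : ∀ i, 0 ≤ p i := fun i => Complex.normSq_nonneg _
  have hstarφ : star φ = Matrix.vecMul (star ψ₀) U := by
    rw [hφ, Matrix.star_mulVec, Matrix.star_eq_conjTranspose, Matrix.conjTranspose_conjTranspose]
  have hdiag : ∀ v : Fin d → ℂ,
      star ψ₀ ⬝ᵥ (U * Matrix.diagonal v * star U).mulVec ψ₀
        = ∑ i, v i * (p i : ℂ) := by
    intro v
    rw [← Matrix.mulVec_mulVec, ← Matrix.mulVec_mulVec, Matrix.dotProduct_mulVec, ← hφ, ← hstarφ]
    simp only [dotProduct, Matrix.mulVec_diagonal, Pi.star_apply]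
    refine Finset.sum_congr rfl fun i _ => ?_
    rw [hp]
    rw [Complex.normSq_eq_conj_mul_self]
    simp [Complex.star_def]
    ring
  have hspec := hH.spectral_theorem
  rw [Unitary.conjStarAlgAut_apply, ← hU] at hspec
  -- sum of p equals 1
  have hsum1 : ∑ i, p i = 1 := by
    have h1 : U * Matrix.diagonal (fun _ : Fin d => (1:ℂ)) * star U = 1 := by
      rw [Matrix.diagonal_one, Matrix.mul_one, hmulstar]
    have h2 := hdiag (fun _ => 1)
    rw [h1, Matrix.one_mulVec, hnorm] at h2
    have h3 := congrArg Complex.re h2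
    simpa [Complex.re_sum] using h3.symm
  -- energy
  have henergy : (star ψ₀ ⬝ᵥ H.mulVec ψ₀).re = ∑ i, hH.eigenvalues i * p i := by
    have h2 := hdiag (RCLike.ofReal ∘ hH.eigenvalues)
    rw [← hspec] at h2
    have h3 := congrArg Complex.re h2
    simpa [Complex.re_sum] using h3
  set E : ℝ := ∑ i, hH.eigenvalues i * p i with hE
  -- exponential computation
  have key : ∀ (A : Matrix (Fin d) (Fin d) ℂ) (v : Fin d → ℝ),
      A = U * Matrix.diagonal (RCLike.ofReal ∘ v) * star U →
      NormedSpace.exp (c • A)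
        = U * Matrix.diagonal (fun i => Complex.exp (c * (v i : ℂ))) * star U := by
    intro A v hA
    rw [hA]
    have h2 : (Matrix.diagonal (fun i => c * (v i : ℂ)) : Matrix (Fin d) (Fin d) ℂ)
        = c • Matrix.diagonal (RCLike.ofReal ∘ v) := by
      rw [← Matrix.diagonal_smul]
      congr 1
    have h1 : c • (U * Matrix.diagonal (RCLike.ofReal ∘ v) * star U)
        = U * Matrix.diagonal (fun i => c * (v i : ℂ)) * star U := by
      rw [h2, mul_smul_comm, smul_mul_assoc]
    rw [h1, ← hinv, Matrix.exp_conj U _ hUnit, Matrix.exp_diagonal, Pi.exp_def]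
    simp [← Complex.exp_eq_exp_ℂ]
  have hexp := key H hH.eigenvalues hspec
  -- orthogonality as a sum
  have hS0 : ∑ i, Complex.exp (c * (hH.eigenvalues i : ℂ)) * (p i : ℂ) = 0 := by
    rw [← hdiag, ← hexp]
    exact horth
  -- shifted sum
  have hS : ∑ i, Complex.exp ((-(T * (hH.eigenvalues i - lmin)) : ℝ) * Complex.I) * (p i : ℂ)
      = 0 := by
    have hterm : ∀ i, Complex.exp ((-(T * (hH.eigenvalues i - lmin)) : ℝ) * Complex.I) * (p i : ℂ)
        = Complex.exp ((T * lmin : ℝ) * Complex.I)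
          * (Complex.exp (c * (hH.eigenvalues i : ℂ)) * (p i : ℂ)) := by
      intro i
      rw [← mul_assoc, ← Complex.exp_add]
      congr 2
      rw [hc]
      push_cast
      ring
    rw [Finset.sum_congr rfl fun i _ => hterm i, ← Finset.mul_sum, hS0, mul_zero]
  -- real and imaginary parts
  have hterm2 : ∀ i, Complex.exp ((-(T * (hH.eigenvalues i - lmin)) : ℝ) * Complex.I) * (p i : ℂ)
      = ((Real.cos (T * (hH.eigenvalues i - lmin)) * p i : ℝ) : ℂ)
        - ((Real.sin (T * (hH.eigenvalues i - lmin)) * p i : ℝ) : ℂ) * Complex.I := by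
    intro i
    rw [Complex.exp_mul_I, ← Complex.ofReal_cos, ← Complex.ofReal_sin,
      Real.cos_neg, Real.sin_neg]
    push_cast
    ring
  rw [Finset.sum_congr rfl fun i _ => hterm2 i] at hS
  have hsplit : ((∑ i, Real.cos (T * (hH.eigenvalues i - lmin)) * p i : ℝ) : ℂ)
      - ((∑ i, Real.sin (T * (hH.eigenvalues i - lmin)) * p i : ℝ) : ℂ) * Complex.I = 0 := by
    calc ((∑ i, Real.cos (T * (hH.eigenvalues i - lmin)) * p i : ℝ) : ℂ)
        - ((∑ i, Real.sin (T * (hH.eigenvalues i - lmin)) * p i : ℝ) : ℂ) * Complex.I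
        = ∑ i, (((Real.cos (T * (hH.eigenvalues i - lmin)) * p i : ℝ) : ℂ)
            - ((Real.sin (T * (hH.eigenvalues i - lmin)) * p i : ℝ) : ℂ) * Complex.I) := by
          rw [Complex.ofReal_sum, Complex.ofReal_sum, Finset.sum_mul, Finset.sum_sub_distrib]
      _ = 0 := hS
  have hre : ∑ i, Real.cos (T * (hH.eigenvalues i - lmin)) * p i = 0 := by
    have := congrArg Complex.re hsplit
    simp only [Complex.sub_re, Complex.mul_re, Complex.ofReal_re, Complex.ofReal_im,
      Complex.I_re, Complex.I_im, Complex.zero_re] at this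
    linarith [this]
  -- the Margolus-Levitin estimate
  have hineq : ∑ i, (1 - 2 / Real.pi * (T * (hH.eigenvalues i - lmin)
        + Real.sin (T * (hH.eigenvalues i - lmin)))) * p i
      ≤ ∑ i, Real.cos (T * (hH.eigenvalues i - lmin)) * p i := by
    apply Finset.sum_le_sum
    intro i _
    apply mul_le_mul_of_nonneg_right _ (hp0 i)
    exact ml_cos_ineq (by nlinarith [hlb i, hT.le])
  rw [hre] at hineq
  have him : ∑ i, Real.sin (T * (hH.eigenvalues i - lmin)) * p i = 0 := by
    have := congrArg Complex.im hsplit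
    simp only [Complex.sub_im, Complex.mul_im, Complex.ofReal_re, Complex.ofReal_im,
      Complex.I_re, Complex.I_im, Complex.zero_im] at this
    linarith [this]
  have hexpand : ∑ i, (1 - 2 / Real.pi * (T * (hH.eigenvalues i - lmin)
        + Real.sin (T * (hH.eigenvalues i - lmin)))) * p i
      = 1 - 2 / Real.pi * T * (E - lmin) := by
    have h1 : ∀ i, (1 - 2 / Real.pi * (T * (hH.eigenvalues i - lmin)
          + Real.sin (T * (hH.eigenvalues i - lmin)))) * p i
        = p i - 2 / Real.pi * T * (hH.eigenvalues i * p i - lmin * p i)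
          - 2 / Real.pi * (Real.sin (T * (hH.eigenvalues i - lmin)) * p i) := by
      intro i; ring
    rw [Finset.sum_congr rfl fun i _ => h1 i]
    rw [Finset.sum_sub_distrib, Finset.sum_sub_distrib, ← Finset.mul_sum, ← Finset.mul_sum,
      Finset.sum_sub_distrib, ← Finset.mul_sum, him, hsum1, ← hE]
    ring
  rw [hexpand] at hineq
  -- conclude
  have hElm : Real.pi / 2 ≤ T * (E - lmin) := by
    have h2 : 2 / Real.pi * (T * (E - lmin)) ≥ 1 := by nlinarith
    calc Real.pi / 2 = Real.pi / 2 * 1 := by ring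
      _ ≤ Real.pi / 2 * (2 / Real.pi * (T * (E - lmin))) := by
          apply mul_le_mul_of_nonneg_left h2 (by positivity)
      _ = T * (E - lmin) := by field_simp
  have hEpos : 0 < E - lmin := by nlinarith
  rw [henergy, ge_iff_le, div_le_iff₀ (by linarith : (0:ℝ) < 2 * (E - lmin))]
  nlinarith [hElm]
end

section
/- Fix ε > 0 and let ρ_ε = diag(1, e^{−ε})/(1 + e^{−ε}) and σ_ε = diag(e^{−ε}, 1)/(1 + e^{−ε}) be 2×2 density matrices (the thermal state and the population-inverted thermal state of a qubit with internal Hamiltonian I = diag(0,1)). Let X = [[0,1],[1,0]] be the Pauli X matrix and let X^{⊗N} denote its N-fold Kronecker power. Then for every positive integer N, the unitary U = exp(−i (π/(2√N)) · √N X^{⊗N}) satisfies U ρ_ε^{⊗N} U† = σ_ε^{⊗N}. That is, the time-independent collective Hamiltonian √N X^{⊗N} charges all N batteries from ρ_ε^{⊗N} to σ_ε^{⊗N} in time T_♯ = π/(2√N), a factor √N faster than the single-battery charging time T_∥ = π/2 achieved by applying X to each battery (exp(−i(π/2)X) ρ_ε exp(i(π/2)X) = σ_ε). -/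
open scoped Matrix ComplexOrder

/-- The thermal qubit state `ρ_ε = diag(1, e^{−ε})/(1 + e^{−ε})` at inverse temperature
`ε` for the internal Hamiltonian `I = diag(0, 1)`. -/
noncomputable def rhoTherm (ε : ℝ) : Matrix (Fin 2) (Fin 2) ℂ :=
  (1 + (Real.exp (-ε) : ℂ))⁻¹ • !![1, 0; 0, (Real.exp (-ε) : ℂ)]

/-- The population-inverted thermal qubit state `σ_ε = diag(e^{−ε}, 1)/(1 + e^{−ε})`. -/
noncomputable def sigmaTherm (ε : ℝ) : Matrix (Fin 2) (Fin 2) ℂ :=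
  (1 + (Real.exp (-ε) : ℂ))⁻¹ • !![(Real.exp (-ε) : ℂ), 0; 0, 1]

/-- The Pauli `X` matrix. -/
def pauliX : Matrix (Fin 2) (Fin 2) ℂ := !![0, 1; 1, 0]

/-- The `N`-fold Kronecker (tensor) power of a `d×d` matrix, realised on the index set
`Fin N → Fin d`: `(ρ^{⊗N}) i j = ∏ₜ ρ (i t) (j t)`. -/
def kronPow {d : ℕ} (ρ : Matrix (Fin d) (Fin d) ℂ) (N : ℕ) :
    Matrix (Fin N → Fin d) (Fin N → Fin d) ℂ :=
  fun i j => ∏ t, ρ (i t) (j t)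

section exp_inv
variable {n : Type*} [Fintype n] [DecidableEq n]

private lemma proj_mul_proj (P Q : Matrix n n ℂ) (hP : P * P = P) (hQ : Q * Q = Q)
    (hPQ : P * Q = 0) (hQP : Q * P = 0) (a b c d : ℂ) :
    (a • P + b • Q) * (c • P + d • Q) = (a * c) • P + (b * d) • Q := by
  rw [Matrix.add_mul, Matrix.mul_add, Matrix.mul_add, Matrix.smul_mul, Matrix.smul_mul,
    Matrix.smul_mul, Matrix.smul_mul, Matrix.mul_smul, Matrix.mul_smul, Matrix.mul_smul,
    Matrix.mul_smul, hP, hQ, hPQ, hQP, smul_zero, smul_zero, smul_zero, smul_zero,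
    smul_smul, smul_smul]
  abel

/-- The algebra hom `ℂ × ℂ → Mₙ(ℂ)`, `(a,b) ↦ a•P + b•Q`, for the spectral projections
`P, Q` of an involution `A`. -/
noncomputable def invHom (A : Matrix n n ℂ) (hA : A * A = 1) :
    (ℂ × ℂ) →ₐ[ℂ] Matrix n n ℂ :=
  AlgHom.ofLinearMap
    { toFun := fun p => p.1 • ((2:ℂ)⁻¹ • (1 + A)) + p.2 • ((2:ℂ)⁻¹ • (1 - A))
      map_add' := by intro p q; simp only [Prod.fst_add, Prod.snd_add, add_smul]; abel
      map_smul' := by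
        intro c p
        simp only [Prod.smul_fst, Prod.smul_snd, smul_eq_mul, RingHom.id_apply, smul_add,
          mul_smul] }
    (by
      show (1:ℂ) • ((2:ℂ)⁻¹ • (1 + A)) + (1:ℂ) • ((2:ℂ)⁻¹ • (1 - A)) = 1
      rw [one_smul, one_smul, ← smul_add]
      have : (1 + A) + (1 - A) = (2:ℂ) • (1 : Matrix n n ℂ) := by rw [two_smul]; abel
      rw [this, smul_smul]; norm_num)
    (by
      intro x y
      have hP : ((2:ℂ)⁻¹ • (1 + A)) * ((2:ℂ)⁻¹ • (1 + A)) = (2:ℂ)⁻¹ • (1 + A) := by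
        rw [Matrix.smul_mul, Matrix.mul_smul, smul_smul]
        have : (1 + A) * (1 + A) = (2:ℂ) • (1 + A) := by
          simp only [Matrix.add_mul, Matrix.mul_add, hA, Matrix.one_mul, Matrix.mul_one,
            two_smul]
          abel
        rw [this, smul_smul]; norm_num
      have hQ : ((2:ℂ)⁻¹ • (1 - A)) * ((2:ℂ)⁻¹ • (1 - A)) = (2:ℂ)⁻¹ • (1 - A) := by
        rw [Matrix.smul_mul, Matrix.mul_smul, smul_smul]
        have : (1 - A) * (1 - A) = (2:ℂ) • (1 - A) := by
          simp only [Matrix.sub_mul, Matrix.mul_sub, hA, Matrix.one_mul, Matrix.mul_one,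
            two_smul]
          abel
        rw [this, smul_smul]; norm_num
      have hPQ : ((2:ℂ)⁻¹ • (1 + A)) * ((2:ℂ)⁻¹ • (1 - A)) = 0 := by
        rw [Matrix.smul_mul, Matrix.mul_smul, smul_smul]
        have : (1 + A) * (1 - A) = 0 := by
          simp only [Matrix.add_mul, Matrix.mul_sub, hA, Matrix.one_mul, Matrix.mul_one]
          abel
        rw [this, smul_zero]
      have hQP : ((2:ℂ)⁻¹ • (1 - A)) * ((2:ℂ)⁻¹ • (1 + A)) = 0 := by
        rw [Matrix.smul_mul, Matrix.mul_smul, smul_smul]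
        have : (1 - A) * (1 + A) = 0 := by
          simp only [Matrix.sub_mul, Matrix.mul_add, hA, Matrix.one_mul, Matrix.mul_one]
          abel
        rw [this, smul_zero]
      show (x.1 * y.1) • ((2:ℂ)⁻¹ • (1 + A)) + (x.2 * y.2) • ((2:ℂ)⁻¹ • (1 - A)) =
        (x.1 • ((2:ℂ)⁻¹ • (1 + A)) + x.2 • ((2:ℂ)⁻¹ • (1 - A))) *
          (y.1 • ((2:ℂ)⁻¹ • (1 + A)) + y.2 • ((2:ℂ)⁻¹ • (1 - A)))
      rw [proj_mul_proj _ _ hP hQ hPQ hQP])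

/-- Matrix exponential of a scalar multiple of an involution. -/
theorem exp_smul_involution (A : Matrix n n ℂ) (hA : A * A = 1) (c : ℂ) :
    NormedSpace.exp (c • A) =
      ((Complex.exp c + Complex.exp (-c)) / 2) • (1 : Matrix n n ℂ) +
        ((Complex.exp c - Complex.exp (-c)) / 2) • A := by
  letI : SeminormedRing (Matrix n n ℂ) := Matrix.linftyOpSemiNormedRing
  letI : NormedRing (Matrix n n ℂ) := Matrix.linftyOpNormedRing
  letI : NormedAlgebra ℂ (Matrix n n ℂ) := Matrix.linftyOpNormedAlgebra
  have hφ : Continuous (invHom A hA) :=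
    LinearMap.continuous_of_finiteDimensional (invHom A hA).toLinearMap
  have hx : (invHom A hA) (c, -c) = c • A := by
    show c • ((2:ℂ)⁻¹ • (1 + A)) + (-c) • ((2:ℂ)⁻¹ • (1 - A)) = c • A
    rw [smul_smul, smul_smul, smul_add, smul_sub, ← add_sub_assoc]
    module
  have key := NormedSpace.map_exp (invHom A hA) hφ (c, -c)
  rw [hx] at key
  refine Eq.trans key.symm ?_
  have hexp : NormedSpace.exp ((c, -c) : ℂ × ℂ) =
      (Complex.exp c, Complex.exp (-c)) := by
    have h1 := Prod.fst_exp ((c, -c) : ℂ × ℂ)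
    have h2 := Prod.snd_exp ((c, -c) : ℂ × ℂ)
    ext
    · rw [h1, ← Complex.exp_eq_exp_ℂ]
    · rw [h2, ← Complex.exp_eq_exp_ℂ]
  rw [hexp]
  show Complex.exp c • ((2:ℂ)⁻¹ • (1 + A)) + Complex.exp (-c) • ((2:ℂ)⁻¹ • (1 - A)) = _
  rw [smul_smul, smul_smul, smul_add, smul_sub]
  rw [div_eq_mul_inv, div_eq_mul_inv, add_mul, sub_mul, add_smul, sub_smul, mul_comm]
  rw [mul_comm (Complex.exp (-c))]
  abel

/-- `exp((−i·(π/2))•A) = −i•A` for an involution `A`. -/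
theorem exp_neg_I_pi_div_two_smul (A : Matrix n n ℂ) (hA : A * A = 1) :
    NormedSpace.exp ((-Complex.I * ((Real.pi / 2 : ℝ) : ℂ)) • A) = (-Complex.I) • A := by
  have e1 : Complex.exp (-Complex.I * ((Real.pi / 2 : ℝ) : ℂ)) = -Complex.I := by
    rw [show -Complex.I * ((Real.pi / 2 : ℝ) : ℂ) = -(↑Real.pi / 2 * Complex.I) by
      push_cast; ring]
    rw [Complex.exp_neg, Complex.exp_mul_I, Complex.cos_pi_div_two, Complex.sin_pi_div_two,
      zero_add, one_mul, Complex.inv_I]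
  have e2 : Complex.exp (-(-Complex.I * ((Real.pi / 2 : ℝ) : ℂ))) = Complex.I := by
    rw [show -(-Complex.I * ((Real.pi / 2 : ℝ) : ℂ)) = ↑Real.pi / 2 * Complex.I by
      push_cast; ring]
    rw [Complex.exp_mul_I, Complex.cos_pi_div_two, Complex.sin_pi_div_two, zero_add, one_mul]
  rw [exp_smul_involution A hA, e1, e2,
    show ((-Complex.I + Complex.I) / 2 : ℂ) = 0 by ring,
    show ((-Complex.I - Complex.I) / 2 : ℂ) = -Complex.I by ring, zero_smul, zero_add]

/-- `exp((i·(π/2))•A) = i•A` for an involution `A`. -/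
theorem exp_I_pi_div_two_smul (A : Matrix n n ℂ) (hA : A * A = 1) :
    NormedSpace.exp ((Complex.I * ((Real.pi / 2 : ℝ) : ℂ)) • A) = Complex.I • A := by
  have e1 : Complex.exp (Complex.I * ((Real.pi / 2 : ℝ) : ℂ)) = Complex.I := by
    rw [show Complex.I * ((Real.pi / 2 : ℝ) : ℂ) = ↑Real.pi / 2 * Complex.I by
      push_cast; ring]
    rw [Complex.exp_mul_I, Complex.cos_pi_div_two, Complex.sin_pi_div_two, zero_add, one_mul]
  have e2 : Complex.exp (-(Complex.I * ((Real.pi / 2 : ℝ) : ℂ))) = -Complex.I := by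
    rw [show -(Complex.I * ((Real.pi / 2 : ℝ) : ℂ)) = -(↑Real.pi / 2 * Complex.I) by
      push_cast; ring]
    rw [Complex.exp_neg, Complex.exp_mul_I, Complex.cos_pi_div_two, Complex.sin_pi_div_two,
      zero_add, one_mul, Complex.inv_I]
  rw [exp_smul_involution A hA, e1, e2,
    show ((Complex.I + -Complex.I) / 2 : ℂ) = 0 by ring,
    show ((Complex.I - -Complex.I) / 2 : ℂ) = Complex.I by ring, zero_smul, zero_add]

end exp_inv

lemma kronPow_mul {d : ℕ} (M M' : Matrix (Fin d) (Fin d) ℂ) (N : ℕ) :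
    kronPow M N * kronPow M' N = kronPow (M * M') N := by
  ext i j
  simp only [kronPow, Matrix.mul_apply]
  rw [show (∏ t, ∑ s, M (i t) s * M' s (j t)) =
      ∑ p ∈ Fintype.piFinset (fun _ : Fin N => (Finset.univ : Finset (Fin d))),
        ∏ t, M (i t) (p t) * M' (p t) (j t) from Finset.prod_univ_sum _ _]
  rw [Fintype.piFinset_univ]
  exact Finset.sum_congr rfl fun k _ => (Finset.prod_mul_distrib).symm

lemma kronPow_one {d : ℕ} (N : ℕ) : kronPow (1 : Matrix (Fin d) (Fin d) ℂ) N = 1 := by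
  ext i j
  simp only [kronPow, Matrix.one_apply]
  rw [Fintype.prod_boole]
  simp [funext_iff]

theorem pauliX_sq : pauliX * pauliX = 1 := by
  ext i j
  fin_cases i <;> fin_cases j <;>
    simp [pauliX, Matrix.mul_apply, Fin.sum_univ_two, Matrix.one_apply]

theorem pauliX_conj (ε : ℝ) : pauliX * rhoTherm ε * pauliX = sigmaTherm ε := by
  rw [rhoTherm, sigmaTherm, Matrix.mul_smul, Matrix.smul_mul]
  congr 1
  rw [pauliX, Matrix.mul_fin_two, Matrix.mul_fin_two]
  norm_num

lemma kronPow_pauliX_sq (N : ℕ) : kronPow pauliX N * kronPow pauliX N = 1 := by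
  rw [kronPow_mul, pauliX_sq, kronPow_one]

lemma kronPow_pauliX_conjTranspose (N : ℕ) : (kronPow pauliX N)ᴴ = kronPow pauliX N := by
  ext i j
  rw [Matrix.conjTranspose_apply]
  show star (∏ t, pauliX (j t) (i t)) = ∏ t, pauliX (i t) (j t)
  rw [star_prod]
  refine Finset.prod_congr rfl fun t _ => ?_
  generalize i t = a; generalize j t = b
  fin_cases a <;> fin_cases b <;> simp [pauliX]

/-- **Extensive collective charging speed-up for thermal qubit batteries
(Proposition 1).**  For every `ε > 0` and every positive integer `N`, the unitary
`U = exp(−i (π/(2√N)) · √N X^{⊗N})` maps `ρ_ε^{⊗N}` to `σ_ε^{⊗N}`, i.e. the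
time-independent collective Hamiltonian `√N X^{⊗N}` charges all `N` batteries in time
`T_♯ = π/(2√N)`; this is a factor `√N` faster than the single-battery charging time
`T_∥ = π/2` achieved by applying `X` to each battery:
`exp(−i(π/2)X) ρ_ε exp(i(π/2)X) = σ_ε`. -/
theorem collective_charging_thermal_qubits (ε : ℝ) (hε : 0 < ε) (N : ℕ) (hN : 0 < N) :
    (NormedSpace.exp ((-Complex.I * ((Real.pi / (2 * Real.sqrt N) : ℝ) : ℂ)) •
          (((Real.sqrt N : ℝ) : ℂ) • kronPow pauliX N)) *
        kronPow (rhoTherm ε) N *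
        (NormedSpace.exp ((-Complex.I * ((Real.pi / (2 * Real.sqrt N) : ℝ) : ℂ)) •
          (((Real.sqrt N : ℝ) : ℂ) • kronPow pauliX N)))ᴴ =
      kronPow (sigmaTherm ε) N) ∧
    (NormedSpace.exp ((-Complex.I * ((Real.pi / 2 : ℝ) : ℂ)) • pauliX) * rhoTherm ε *
        NormedSpace.exp ((Complex.I * ((Real.pi / 2 : ℝ) : ℂ)) • pauliX) =
      sigmaTherm ε) := by
  have hA := kronPow_pauliX_sq N
  have hs : Real.sqrt N ≠ 0 := ne_of_gt (Real.sqrt_pos.2 (by exact_mod_cast hN))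
  have hsc : (-Complex.I * ((Real.pi / (2 * Real.sqrt N) : ℝ) : ℂ)) •
      (((Real.sqrt N : ℝ) : ℂ) • kronPow pauliX N) =
      (-Complex.I * ((Real.pi / 2 : ℝ) : ℂ)) • kronPow pauliX N := by
    rw [smul_smul]
    congr 1
    have hs' : ((Real.sqrt N : ℝ) : ℂ) ≠ 0 := by exact_mod_cast hs
    push_cast
    field_simp
  constructor
  · rw [hsc, exp_neg_I_pi_div_two_smul _ hA, Matrix.conjTranspose_smul,
      kronPow_pauliX_conjTranspose]
    rw [show star (-Complex.I) = Complex.I by simp]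
    rw [Matrix.smul_mul, Matrix.smul_mul, Matrix.mul_smul, smul_smul,
      show -Complex.I * Complex.I = 1 by simp [Complex.I_mul_I], one_smul]
    rw [Matrix.mul_assoc, kronPow_mul, kronPow_mul]
    congr 1
    rw [← Matrix.mul_assoc, pauliX_conj]
  · rw [exp_neg_I_pi_div_two_smul _ pauliX_sq, exp_I_pi_div_two_smul _ pauliX_sq]
    rw [Matrix.smul_mul, Matrix.smul_mul, Matrix.mul_smul, smul_smul,
      show -Complex.I * Complex.I = 1 by simp [Complex.I_mul_I], one_smul]
    rw [pauliX_conj]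
end
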